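/- For every real number x ≥ 1, the sequence of truncated fourth-root nested radicals Q m x converges to x + 1 as m → ∞; that is, x + 1 = (1 + 4x + 6x² + x³(1 + 4(x+3) + 6(x+3)² + (x+3)³(...)^{1/4})^{1/4})^{1/4}. -/
import Mathlib

noncomputable def Q : ℕ → ℝ → ℝ
  | 0, _ => 0
  | m + 1, y => (1 + 4 * y + 6 * y ^ 2 + y ^ 3 * Q m (y + 3)) ^ (1 / 4 : ℝ)

lemma Q_nonneg : ∀ m, ∀ x : ℝ, 1 ≤ x → 0 ≤ Q m x
  | 0, _, _ => le_refl 0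
  | m + 1, x, hx => by
    have h := Q_nonneg m (x + 3) (by linarith)
    have hb : (0:ℝ) ≤ 1 + 4 * x + 6 * x ^ 2 + x ^ 3 * Q m (x + 3) := by
      nlinarith [mul_nonneg (pow_nonneg (by linarith : (0:ℝ) ≤ x) 3) h]
    exact Real.rpow_nonneg hb _

lemma pow4_quarter (a : ℝ) (ha : 0 ≤ a) : ((a ^ (4:ℕ)) : ℝ) ^ (1/4:ℝ) = a := by
  rw [← Real.rpow_natCast a 4, ← Real.rpow_mul ha]
  norm_num

lemma Q_le : ∀ m, ∀ x : ℝ, 1 ≤ x → Q m x ≤ x + 1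
  | 0, _, hx => by simp [Q]; linarith
  | m + 1, x, hx => by
    have h := Q_le m (x + 3) (by linarith)
    have hQn := Q_nonneg m (x + 3) (by linarith)
    have hx0 : (0:ℝ) ≤ x := by linarith
    have hb : (0:ℝ) ≤ 1 + 4 * x + 6 * x ^ 2 + x ^ 3 * Q m (x + 3) := by
      nlinarith [mul_nonneg (pow_nonneg hx0 3) hQn]
    have hle : 1 + 4 * x + 6 * x ^ 2 + x ^ 3 * Q m (x + 3) ≤ (x + 1) ^ (4:ℕ) := by
      nlinarith [mul_le_mul_of_nonneg_left h (pow_nonneg hx0 3)]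
    calc Q (m+1) x ≤ ((x+1)^(4:ℕ)) ^ (1/4:ℝ) :=
          Real.rpow_le_rpow hb hle (by norm_num)
      _ = x + 1 := pow4_quarter _ (by linarith)

lemma Q_ge : ∀ m, ∀ x : ℝ, 1 ≤ x → (x+1) ^ (1 - (3/4:ℝ)^(m+1)) ≤ Q (m+1) x
  | 0, x, hx => by
    have hb : (0:ℝ) ≤ x + 1 := by linarith
    have h1 : (x + 1 : ℝ) ≤ 1 + 4 * x + 6 * x ^ 2 + x ^ 3 * Q 0 (x + 3) := by
      simp only [Q]; nlinarith
    have : (x+1) ^ ((1:ℝ) - (3/4:ℝ)^1) = (x+1) ^ (1/4:ℝ) := by norm_num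
    rw [this]
    calc (x+1) ^ (1/4:ℝ) ≤ (1 + 4 * x + 6 * x ^ 2 + x ^ 3 * Q 0 (x + 3)) ^ (1/4:ℝ) :=
          Real.rpow_le_rpow hb h1 (by norm_num)
      _ = Q 1 x := rfl
  | m + 1, x, hx => by
    set e : ℝ := (3/4:ℝ)^(m+1) with he
    have hx3 : (1:ℝ) ≤ x + 3 := by linarith
    have hx4 : (0:ℝ) < x + 4 := by linarith
    have hx1 : (0:ℝ) < x + 1 := by linarith
    have ih' : (x+4) ^ (1 - e) ≤ Q (m+1) (x+3) := by
      have h := Q_ge m (x+3) hx3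
      have : x + 3 + 1 = x + 4 := by ring
      rwa [this] at h
    have hQpos : 0 ≤ Q (m+1) (x+3) := Q_nonneg _ _ hx3
    have hp : (0:ℝ) ≤ (x+4) ^ (-e) := Real.rpow_nonneg (le_of_lt hx4) _
    have h2 : (x+4) ^ ((1:ℝ)-e) = (x+4) ^ (-e) * (x+4) := by
      rw [show (1:ℝ) - e = -e + 1 by ring, Real.rpow_add hx4, Real.rpow_one]
    have h1 : (x+4) ^ (-e) ≤ 1 := by
      apply Real.rpow_le_one_of_one_le_of_nonpos (by linarith)
      have : (0:ℝ) < e := by positivity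
      linarith
    have hA : (x+4) ^ (-e) * (x+1)^(4:ℕ) ≤ 1 + 4*x + 6*x^2 + x^3 * Q (m+1) (x+3) := by
      have key : ((x+1):ℝ)^(4:ℕ) = (1+4*x+6*x^2) + x^3*(x+4) := by ring
      have t1 : (x+4)^(-e) * (1+4*x+6*x^2) ≤ 1+4*x+6*x^2 :=
        mul_le_of_le_one_left (by nlinarith) h1
      have t2 : x^3 * ((x+4)^((1:ℝ)-e)) ≤ x^3 * Q (m+1) (x+3) :=
        mul_le_mul_of_nonneg_left ih' (by positivity)
      calc (x+4) ^ (-e) * (x+1)^(4:ℕ)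
          = (x+4)^(-e) * (1+4*x+6*x^2) + x^3 * ((x+4)^((1:ℝ)-e)) := by
            rw [key, h2]; ring
        _ ≤ (1+4*x+6*x^2) + x^3 * Q (m+1) (x+3) := add_le_add t1 t2
        _ = 1 + 4*x + 6*x^2 + x^3 * Q (m+1) (x+3) := by ring
    have hBpos : (0:ℝ) ≤ (x+4)^(-e) * (x+1)^(4:ℕ) := by positivity
    have hstep : ((x+4)^(-e) * (x+1)^(4:ℕ)) ^ (1/4:ℝ) ≤ Q (m+1+1) x := by
      show _ ≤ (1 + 4 * x + 6 * x ^ 2 + x ^ 3 * Q (m+1) (x + 3)) ^ (1 / 4 : ℝ)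
      exact Real.rpow_le_rpow hBpos hA (by norm_num)
    have hcomp : ((x+4)^(-e) * (x+1)^(4:ℕ)) ^ (1/4:ℝ)
        = (x+4)^(-e * (1/4:ℝ)) * (x+1) := by
      rw [Real.mul_rpow hp (by positivity), ← Real.rpow_mul (le_of_lt hx4),
        pow4_quarter _ (le_of_lt hx1)]
    have hchain : (x+1) ^ (1 - (3/4:ℝ)^(m+1+1)) ≤ (x+4)^(-e * (1/4:ℝ)) * (x+1) := by
      have hexp : (3/4:ℝ)^(m+1+1) = (3/4:ℝ) * e := by rw [he, pow_succ]; ring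
      have hsplit : (x+1) ^ ((1:ℝ) - (3/4:ℝ)*e) = (x+1)^(-(3/4:ℝ)*e) * (x+1) := by
        rw [show (1:ℝ) - (3/4:ℝ)*e = -(3/4:ℝ)*e + 1 by ring, Real.rpow_add hx1,
          Real.rpow_one]
      rw [hexp, hsplit]
      have hmono : (x+1)^(-(3/4:ℝ)*e) ≤ (x+4)^(-e * (1/4:ℝ)) := by
        have hb : x + 4 ≤ (x+1)^(3:ℕ) := by nlinarith
        have he0 : (0:ℝ) < e := by positivity
        have h3 : ((x+1)^(3:ℕ) : ℝ) ^ (-e * (1/4:ℝ)) ≤ (x+4) ^ (-e * (1/4:ℝ)) :=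
          Real.rpow_le_rpow_of_nonpos hx4 hb (by nlinarith)
        have h4 : ((x+1)^(3:ℕ) : ℝ) ^ (-e * (1/4:ℝ)) = (x+1)^(-(3/4:ℝ)*e) := by
          rw [← Real.rpow_natCast (x+1) 3, ← Real.rpow_mul (le_of_lt hx1)]
          norm_num; ring_nf
        rw [← h4]; exact h3
      exact mul_le_mul_of_nonneg_right hmono (le_of_lt hx1)
    exact hchain.trans (hcomp ▸ hstep)

theorem nested_fourth_root_radical_eq (x : ℝ) (hx : 1 ≤ x) :
    Filter.Tendsto (fun m => Q m x) Filter.atTop (nhds (x + 1)) := by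
  have hx1 : (0:ℝ) < x + 1 := by linarith
  have hlow : Filter.Tendsto (fun m : ℕ => (x+1) ^ (1 - (3/4:ℝ)^m)) Filter.atTop
      (nhds (x+1)) := by
    have h0 : Filter.Tendsto (fun m : ℕ => ((3:ℝ)/4)^m) Filter.atTop (nhds 0) :=
      tendsto_pow_atTop_nhds_zero_of_lt_one (by norm_num) (by norm_num)
    have h1 : Filter.Tendsto (fun m : ℕ => 1 - (3/4:ℝ)^m) Filter.atTop (nhds 1) := by
      simpa using tendsto_const_nhds.sub h0
    have := (tendsto_const_nhds : Filter.Tendsto (fun _ : ℕ => x+1) Filter.atTop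
      (nhds (x+1))).rpow h1 (Or.inl (ne_of_gt hx1))
    simpa using this
  refine tendsto_of_tendsto_of_tendsto_of_le_of_le' hlow tendsto_const_nhds ?_ ?_
  · filter_upwards [Filter.eventually_ge_atTop 1] with m hm
    obtain ⟨k, rfl⟩ := Nat.exists_eq_add_of_le hm
    have := Q_ge k x hx
    simpa [Nat.add_comm] using this
  · filter_upwards with m using Q_le m x hx
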